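/- arXiv:0902.1253 — 3 statements merged into one kernel-verified Lean document; each statement's English description precedes it below -/
import Mathlib

section
/- If 1 ≤ k ≤ n−2, then every state-symmetric cellular automaton with n states and neighbourhood size k is captive, i.e., if a local rule δ : A^k → A (with |A| = n) satisfies δ(a₁,…,a_k) = π⁻¹(δ(π(a₁),…,π(a_k))) for every permutation π of A, then δ(a₁,…,a_k) ∈ {a₁,…,a_k} for all a₁,…,a_k. -/
/-- Lemma 1 (state symmetric CA are captive when 1 ≤ k ≤ n-2). -/
theorem state_symmetric_is_captive
    {A : Type} [Fintype A] [DecidableEq A] {n k : ℕ}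
    (hcard : Fintype.card A = n) (hk1 : 1 ≤ k) (hk2 : k ≤ n - 2)
    (δ : (Fin k → A) → A)
    (hsym : ∀ (π : Equiv.Perm A) (a : Fin k → A),
      δ a = π.symm (δ (fun i => π (a i)))) :
    ∀ a : Fin k → A, δ a ∈ Set.range a := by
  intro a
  by_contra hb
  set b := δ a with hbdef
  have hn3 : 3 ≤ n := by omega
  have hcardS : (Finset.image a Finset.univ ∪ {b}).card < (Finset.univ : Finset A).card := by
    have h1 : (Finset.image a Finset.univ ∪ {b}).card ≤
        (Finset.image a Finset.univ).card + 1 := by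
      refine le_trans (Finset.card_union_le _ _) ?_
      simp
    have h2 : (Finset.image a Finset.univ).card ≤ k := by
      refine le_trans (Finset.card_image_le) ?_
      simp
    have : (Finset.univ : Finset A).card = n := by simpa using hcard
    omega
  have hcompl : ((Finset.image a Finset.univ ∪ {b})ᶜ : Finset A).Nonempty := by
    rw [← Finset.card_pos, Finset.card_compl]
    have : Fintype.card A = (Finset.univ : Finset A).card := Finset.card_univ.symm
    omega
  obtain ⟨c, hc⟩ := hcompl
  rw [Finset.mem_compl] at hc
  simp only [Finset.mem_union, Finset.mem_image, Finset.mem_singleton, not_or] at hc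
  obtain ⟨hc1, hc2⟩ := hc
  have hfix : ∀ i, Equiv.swap b c (a i) = a i := by
    intro i
    apply Equiv.swap_apply_of_ne_of_ne
    · intro h
      exact hb ⟨i, by rw [h]⟩
    · intro h
      exact hc1 ⟨i, by simp, h⟩
  have := hsym (Equiv.swap b c) a
  simp only [hfix] at this
  rw [← hbdef, Equiv.symm_swap, Equiv.swap_apply_left] at this
  exact hc2 this.symm
end

section
/- For a fixed neighbourhood size k, the number of state-symmetric cellular automata with n states and arity k is bounded by a constant independent of n for all n ≥ k: the number of equivalence classes of k-tuples under simultaneous state permutation, together with the possible symmetric choices of outputs, does not grow with n once n ≥ k. -/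
open Equiv

/-- Any `k`-tuple in `Fin n` (with `k ≤ n`) can be moved by a permutation into the
first `k` values. -/
lemma exists_perm_lt {k n : ℕ} (hkn : k ≤ n) (a : Fin k → Fin n) :
    ∃ π : Equiv.Perm (Fin n), ∀ i, (π (a i)).val < k := by
  classical
  set s : Finset (Fin n) := Finset.image a Finset.univ with hs
  set t : Finset (Fin n) := Finset.image (Fin.castLE hkn) Finset.univ with ht
  have hscard : s.card ≤ k := le_trans (Finset.card_image_le) (by simp)
  have htcard : t.card = k := by
    rw [ht, Finset.card_image_of_injective _ (Fin.castLE_injective hkn)]; simp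
  obtain ⟨t', ht's, ht'card⟩ := Finset.exists_subset_card_eq (htcard ▸ hscard : s.card ≤ t.card)
  have e : {x // x ∈ s} ≃ {x // x ∈ t'} := Finset.equivOfCardEq ht'card.symm
  refine ⟨e.extendSubtype, fun i => ?_⟩
  have hmem : a i ∈ s := by simp [hs]
  have : e.extendSubtype (a i) ∈ t' := e.extendSubtype_mem (a i) hmem
  have : e.extendSubtype (a i) ∈ t := ht's this
  simp only [ht, Finset.mem_image] at this
  obtain ⟨j, _, hj⟩ := this
  rw [← hj]
  exact j.isLt.trans_le (le_refl k) |>.trans_le (le_refl k)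

/-- For a state-symmetric rule, the value on a tuple supported in the first `k`
states has index at most `k`. -/
lemma val_le_of_symm {k n : ℕ}
    (δ : (Fin k → Fin n) → Fin n)
    (hδ : ∀ (π : Equiv.Perm (Fin n)) (a : Fin k → Fin n),
      δ a = π.symm (δ (fun i => π (a i))))
    (c : Fin k → Fin n) (hc : ∀ i, (c i).val < k) : (δ c).val ≤ k := by
  by_contra hlt
  push_neg at hlt
  have hkn : k < n := hlt.trans (δ c).isLt
  set w : Fin n := ⟨k, hkn⟩ with hw
  have hne : δ c ≠ w := by
    intro h; rw [h] at hlt; exact lt_irrefl _ hlt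
  set π : Equiv.Perm (Fin n) := Equiv.swap (δ c) w with hπ
  have hfix : (fun i => π (c i)) = c := by
    funext i
    refine Equiv.swap_apply_of_ne_of_ne ?_ ?_
    · intro h
      have := hc i
      rw [h] at this
      omega
    · intro h
      have := hc i
      rw [h] at this
      exact absurd this (by simp [hw])
  have := hδ π c
  rw [hfix] at this
  have : π (δ c) = δ c := by
    conv_lhs => rw [this]
    simp
  rw [hπ, Equiv.swap_apply_left] at this
  exact hne this.symm

/-- For fixed k, the number of state-symmetric CA rules with n states is
bounded by a constant independent of n, for all n ≥ k. -/
theorem card_state_symmetric_bounded (k : ℕ) :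
    ∃ K : ℕ, ∀ n : ℕ, k ≤ n →
      Nat.card {δ : (Fin k → Fin n) → Fin n //
        ∀ (π : Equiv.Perm (Fin n)) (a : Fin k → Fin n),
          δ a = π.symm (δ (fun i => π (a i)))} ≤ K := by
  classical
  refine ⟨Nat.card ((Fin k → Fin k) → Fin (k + 1)), fun n hkn => ?_⟩
  set Φ : {δ : (Fin k → Fin n) → Fin n //
        ∀ (π : Equiv.Perm (Fin n)) (a : Fin k → Fin n),
          δ a = π.symm (δ (fun i => π (a i)))} →
      ((Fin k → Fin k) → Fin (k + 1)) :=
    fun δ b => ⟨min (δ.1 (fun i => Fin.castLE hkn (b i))).val k,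
      by have := min_le_right (δ.1 (fun i => Fin.castLE hkn (b i))).val k; omega⟩
    with hΦdef
  apply Nat.card_le_card_of_injective Φ
  intro δ δ' hΦ
  apply Subtype.ext
  funext a
  obtain ⟨π, hπ⟩ := exists_perm_lt hkn a
  set b : Fin k → Fin k := fun i => ⟨(π (a i)).val, hπ i⟩ with hb
  have hcb : (fun i => Fin.castLE hkn (b i)) = fun i => π (a i) := by
    funext i; exact Fin.ext rfl
  have h1 : (δ.1 (fun i => Fin.castLE hkn (b i))).val ≤ k := by
    apply val_le_of_symm δ.1 δ.2
    intro i; exact hπ i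
  have h2 : (δ'.1 (fun i => Fin.castLE hkn (b i))).val ≤ k := by
    apply val_le_of_symm δ'.1 δ'.2
    intro i; exact hπ i
  have hval : (Φ δ b).val = (Φ δ' b).val := by rw [hΦ]
  simp only [hΦdef] at hval
  rw [min_eq_left h1, min_eq_left h2] at hval
  have heq : δ.1 (fun i => Fin.castLE hkn (b i)) = δ'.1 (fun i => Fin.castLE hkn (b i)) :=
    Fin.ext hval
  calc δ.1 a = π.symm (δ.1 (fun i => π (a i))) := δ.2 π a
    _ = π.symm (δ'.1 (fun i => π (a i))) := by rw [← hcb, heq]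
    _ = δ'.1 a := (δ'.2 π a).symm
end

section
/- For every CA A with n states and arity k, the set-CA encoding φ_Set(A), defined on state set Q = A × {0,…,k+1} ∪ {#} by applying A's local rule when the neighbourhood's set of states has the legal form E_i(a₁,…,a_k) = {(a₁,i),(a₂,i+1 mod k+2),…,(a_k,i+k−1 mod k+2)} and outputting # otherwise, is a set CA (its local rule depends only on the set of states in the neighbourhood) and satisfies A ≼ φ_Set(A). -/
/-- A cellular automaton presented by its (nonempty) state set and global map. -/
structure CAs where
  Q : Type
  ne : Nonempty Q
  G : (ℤ → Q) → (ℤ → Q)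

/-- Bijective packing map: groups cells into blocks of m. -/
def pack {Q : Type} (m : ℕ) (c : ℤ → Q) : ℤ → (Fin m → Q) :=
  fun z i => c (m * z + i)

/-- Inverse of the packing map. -/
noncomputable def unpack {Q : Type} (hQ : Nonempty Q) (m : ℕ) :
    (ℤ → (Fin m → Q)) → (ℤ → Q) :=
  haveI := hQ
  Function.invFun (pack m)

/-- Shift by z. -/
def shiftG {Q : Type} (z : ℤ) (c : ℤ → Q) : ℤ → Q := fun x => c (x - z)

/-- Rescaling of a CA by packing factor m, time iteration t and shift z. -/
noncomputable def rescale (A : CAs) (m t : ℕ) (z : ℤ) : CAs where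
  Q := Fin m → A.Q
  ne := ⟨fun _ => A.ne.some⟩
  G := fun c => pack m (shiftG z ((A.G)^[t] (unpack A.ne m c)))

/-- Sub-automaton relation: an injective state map whose uniform extension
intertwines the global maps. -/
def Subs (A B : CAs) : Prop :=
  ∃ φ : A.Q → B.Q, Function.Injective φ ∧
    ∀ c : ℤ → A.Q, (fun z => φ (A.G c z)) = B.G (fun z => φ (c z))

/-- Simulation: some rescaling of A is a sub-automaton of some rescaling of B. -/
noncomputable def Sim (A B : CAs) : Prop :=
  ∃ (m₁ m₂ t₁ t₂ : ℕ) (z₁ z₂ : ℤ), 1 ≤ m₁ ∧ 1 ≤ m₂ ∧ 1 ≤ t₁ ∧ 1 ≤ t₂ ∧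
    Subs (rescale A m₁ t₁ z₁) (rescale B m₂ t₂ z₂)

/-- The CA determined by a local rule δ of arity k (neighbourhood
[-⌊(k-1)/2⌋, ⌊k/2⌋]). -/
def toCAs (Q : Type) (hQ : Nonempty Q) (k : ℕ) (δ : (Fin k → Q) → Q) : CAs where
  Q := Q
  ne := hQ
  G := fun c z => δ (fun i => c (z - ((k - 1) / 2 : ℕ) + i))

open Fin.NatCast in
/-- The set of states of a legal neighbourhood in the set-CA encoding:
E_i(a₁,…,a_k) = {(a₁,i),(a₂,i+1 mod k+2),…,(a_k,i+k-1 mod k+2)}. -/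
def legalSet (n k : ℕ) (i : Fin (k + 2)) (a : Fin k → Fin n) :
    Set (Fin n × Fin (k + 2) ⊕ Unit) :=
  Set.range (fun j : Fin k =>
    (Sum.inl (a j, i + ((j : ℕ) : Fin (k + 2))) : Fin n × Fin (k + 2) ⊕ Unit))

/-! ### Auxiliary lemmas -/

open Fin.NatCast

lemma SetCA.castinj (k : ℕ) {c : Fin (k+2)} {p q : ℕ} (hp : p < k+2) (hq : q < k+2)
    (h : c + (p : Fin (k+2)) = c + (q : Fin (k+2))) : p = q := by
  have h2 := add_left_cancel h
  have h3 := congrArg Fin.val h2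
  simpa [Fin.val_natCast, Nat.mod_eq_of_lt hp, Nat.mod_eq_of_lt hq] using h3

lemma SetCA.legal_unique (n k : ℕ) (hk : 1 ≤ k) {i i' : Fin (k+2)} {a a' : Fin k → Fin n}
    (h : legalSet n k i a = legalSet n k i' a') : i = i' ∧ a = a' := by
  have h0 : (Sum.inl (a' ⟨0, hk⟩, i' + ((0:ℕ) : Fin (k+2))) : Fin n × Fin (k+2) ⊕ Unit)
      ∈ legalSet n k i a := by
    rw [h]; exact ⟨⟨0, hk⟩, rfl⟩
  obtain ⟨j, hj⟩ := h0
  simp only [Sum.inl.injEq, Prod.mk.injEq] at hj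
  have hi' : i' = i + ((j : ℕ) : Fin (k+2)) := by
    have := hj.2
    simpa using this.symm
  have hj0 : (j : ℕ) = 0 := by
    by_contra hne
    have hjm : ((j:ℕ) - 1 : ℕ) < k := by omega
    have h1 : (Sum.inl (a ⟨(j:ℕ)-1, hjm⟩, i + (((j:ℕ)-1 : ℕ) : Fin (k+2)))
        : Fin n × Fin (k+2) ⊕ Unit) ∈ legalSet n k i' a' := by
      rw [← h]; exact ⟨⟨(j:ℕ)-1, hjm⟩, rfl⟩
    obtain ⟨j₂, hj₂⟩ := h1
    simp only [Sum.inl.injEq, Prod.mk.injEq] at hj₂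
    have h2 : i + (((j:ℕ) + (j₂:ℕ) : ℕ) : Fin (k+2)) = i + (((j:ℕ)-1 : ℕ) : Fin (k+2)) := by
      rw [Nat.cast_add, ← add_assoc, ← hi']
      exact hj₂.2
    have hlt : (j:ℕ) + (j₂:ℕ) < 2*(k+2) := by
      have := j.isLt; have := j₂.isLt; omega
    have h3 : ((j:ℕ) + (j₂:ℕ)) % (k+2) = ((j:ℕ)-1) % (k+2) := by
      have h4 := congrArg Fin.val (add_left_cancel h2)
      rw [Fin.val_natCast, Fin.val_natCast] at h4
      exact h4
    have h5 := Nat.div_add_mod ((j:ℕ) + (j₂:ℕ)) (k+2)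
    have h6 : ((j:ℕ) + (j₂:ℕ)) / (k+2) < 2 := by
      rw [Nat.div_lt_iff_lt_mul (by omega)]; omega
    have h7 : ((j:ℕ)-1) % (k+2) = (j:ℕ)-1 := Nat.mod_eq_of_lt (by omega)
    have hjl := j.isLt
    have hj₂l := j₂.isLt
    interval_cases (((j:ℕ) + (j₂:ℕ)) / (k+2)) <;> omega
  have hii : i = i' := by rw [hi', hj0]; simp
  refine ⟨hii, ?_⟩
  funext j
  have h1 : (Sum.inl (a j, i + ((j : ℕ) : Fin (k+2))) : Fin n × Fin (k+2) ⊕ Unit)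
      ∈ legalSet n k i' a' := by rw [← h]; exact ⟨j, rfl⟩
  obtain ⟨j₂, hj₂⟩ := h1
  simp only [Sum.inl.injEq, Prod.mk.injEq] at hj₂
  rw [← hii] at hj₂
  have : (j₂:ℕ) = (j:ℕ) :=
    SetCA.castinj k (j₂.isLt.trans (by omega)) (j.isLt.trans (by omega)) hj₂.2
  have hj₂j : j₂ = j := Fin.ext this
  rw [← hj₂.1, hj₂j]

lemma SetCA.pack_inj {Q : Type} {m : ℕ} (hm : 0 < m) :
    Function.Injective (pack (Q := Q) m) := by
  intro c c' h
  funext x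
  have hmod : (0:ℤ) ≤ x % m := Int.emod_nonneg x (by exact_mod_cast hm.ne')
  have hmod2 : x % m < m := Int.emod_lt_of_pos x (by exact_mod_cast hm)
  have hi : ((x % m).toNat : ℤ) = x % m := Int.toNat_of_nonneg hmod
  have hidx : (x % m).toNat < m := by omega
  have hx : (m : ℤ) * (x / m) + ((⟨(x % m).toNat, hidx⟩ : Fin m) : ℤ) = x := by
    simp only [Fin.val_mk]
    rw [hi]
    exact Int.mul_ediv_add_emod x m
  have := congrFun (congrFun h (x / m)) ⟨(x % m).toNat, hidx⟩
  simpa only [pack, hx] using this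

lemma SetCA.pack_surj {Q : Type} {m : ℕ} (hm : 0 < m) :
    Function.Surjective (pack (Q := Q) m) := by
  intro c'
  refine ⟨fun x => c' (x / m) ⟨(x % m).toNat, ?_⟩, ?_⟩
  · have hmod : (0:ℤ) ≤ x % m := Int.emod_nonneg x (by exact_mod_cast hm.ne')
    have hmod2 : x % m < m := Int.emod_lt_of_pos x (by exact_mod_cast hm)
    omega
  · funext z i
    have hne : (m:ℤ) ≠ 0 := by exact_mod_cast hm.ne'
    have hi0 : (0:ℤ) ≤ (i:ℤ) := Int.ofNat_nonneg _
    have hilt : (i:ℤ) < m := by exact_mod_cast i.isLt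
    have h1 : ((m : ℤ) * z + (i : ℤ)) / m = z := by
      rw [show (m:ℤ) * z + (i:ℤ) = (i:ℤ) + z * m by ring,
        Int.add_mul_ediv_right _ _ hne, Int.ediv_eq_zero_of_lt hi0 hilt, zero_add]
    have h2 : ((m : ℤ) * z + (i : ℤ)) % m = (i:ℤ) := by
      rw [show (m:ℤ) * z + (i:ℤ) = (i:ℤ) + z * m by ring, Int.add_mul_emod_self_right,
        Int.emod_eq_of_lt hi0 hilt]
    simp only [pack, h1, h2]
    exact congrArg (c' z) (Fin.ext (by simp))

lemma SetCA.unpack_pack {Q : Type} (hQ : Nonempty Q) {m : ℕ} (hm : 0 < m) (c : ℤ → Q) :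
    unpack hQ m (pack m c) = c := by
  haveI := hQ
  exact Function.leftInverse_invFun (SetCA.pack_inj hm) c

lemma SetCA.pack_unpack {Q : Type} (hQ : Nonempty Q) {m : ℕ} (hm : 0 < m)
    (c : ℤ → (Fin m → Q)) : pack m (unpack hQ m c) = c := by
  haveI := hQ
  exact Function.rightInverse_invFun (SetCA.pack_surj hm) c

open Fin.CommRing in
lemma SetCA.int_cast_block (k : ℕ) (z : ℤ) (i : Fin (k+2)) :
    ((((k+2 : ℕ) : ℤ) * z + (i : ℤ) : ℤ) : Fin (k+2)) = i := by
  rw [Int.cast_add, Int.cast_mul, Int.cast_natCast, Fin.natCast_self, zero_mul, zero_add,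
    Int.cast_natCast, Fin.cast_val_eq_self]

open Classical in
/-- The set-CA local rule. -/
noncomputable def SetCA.f (n k : ℕ) (δ : (Fin k → Fin n) → Fin n)
    (x : Fin k → (Fin n × Fin (k + 2) ⊕ Unit)) : Fin n × Fin (k + 2) ⊕ Unit :=
  if h : ∃ (i : Fin (k + 2)) (a : Fin k → Fin n), Set.range x = legalSet n k i a then
    Sum.inl (δ h.choose_spec.choose, h.choose + ((k / 2 : ℕ) : Fin (k + 2)))
  else Sum.inr ()

lemma SetCA.f_legal (n k : ℕ) (hk : 1 ≤ k) (δ : (Fin k → Fin n) → Fin n)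
    (x : Fin k → (Fin n × Fin (k + 2) ⊕ Unit)) (i : Fin (k + 2)) (a : Fin k → Fin n)
    (h : Set.range x = legalSet n k i a) :
    SetCA.f n k δ x = Sum.inl (δ a, i + ((k / 2 : ℕ) : Fin (k + 2))) := by
  have hex : ∃ (i : Fin (k + 2)) (a : Fin k → Fin n), Set.range x = legalSet n k i a :=
    ⟨i, a, h⟩
  classical
  rw [SetCA.f]
  rw [dif_pos hex]
  obtain ⟨hi, ha⟩ := SetCA.legal_unique n k hk
    (hex.choose_spec.choose_spec.symm.trans h)
  rw [ha, hi]

open Fin.NatCast in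
/-- For every CA A there is a set-CA encoding φ_Set(A) on state set
A × {0,…,k+1} ∪ {#}: its rule depends only on the set of neighbouring
states, applies A's rule on legal sets E_i(a₁,…,a_k) (outputting
(δ_A(a), i+⌊k/2⌋ mod k+2)), outputs # otherwise, and A ≼ φ_Set(A). -/
theorem set_ca_encoding (n k : ℕ) (hn : 1 ≤ n) (hk : 1 ≤ k)
    (δ : (Fin k → Fin n) → Fin n) :
    ∃ f : (Fin k → (Fin n × Fin (k + 2) ⊕ Unit)) → (Fin n × Fin (k + 2) ⊕ Unit),
      (∀ u v, Set.range u = Set.range v → f u = f v) ∧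
      (∀ (x : Fin k → (Fin n × Fin (k + 2) ⊕ Unit)) (i : Fin (k + 2))
          (a : Fin k → Fin n),
        Set.range x = legalSet n k i a →
          f x = Sum.inl (δ a, i + ((k / 2 : ℕ) : Fin (k + 2)))) ∧
      (∀ x, (¬ ∃ (i : Fin (k + 2)) (a : Fin k → Fin n),
          Set.range x = legalSet n k i a) → f x = Sum.inr ()) ∧
      Sim (toCAs (Fin n) ⟨⟨0, hn⟩⟩ k δ)
        (toCAs (Fin n × Fin (k + 2) ⊕ Unit) ⟨Sum.inr ()⟩ k f) := by
  refine ⟨SetCA.f n k δ, ?_, ?_, ?_, ?_⟩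
  · -- set property
    intro u v huv
    by_cases h : ∃ (i : Fin (k + 2)) (a : Fin k → Fin n), Set.range u = legalSet n k i a
    · obtain ⟨i, a, hia⟩ := h
      rw [SetCA.f_legal n k hk δ u i a hia, SetCA.f_legal n k hk δ v i a (huv ▸ hia)]
    · rw [SetCA.f, dif_neg h, SetCA.f, dif_neg (by rwa [← huv])]
  · intro x i a h
    exact SetCA.f_legal n k hk δ x i a h
  · intro x h
    rw [SetCA.f, dif_neg h]
  · -- the simulation
    open Fin.CommRing in
    set Q' : Type := Fin n × Fin (k + 2) ⊕ Unit with hQ'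
    set A : CAs := toCAs (Fin n) ⟨⟨0, hn⟩⟩ k δ with hA
    set B : CAs := toCAs Q' ⟨Sum.inr ()⟩ k (SetCA.f n k δ) with hB
    set z₀ : ℤ := ((k / 2 : ℕ) : ℤ) - (((k - 1) / 2 : ℕ) : ℤ) with hz₀
    refine ⟨k + 2, k + 2, 1, 1, z₀, z₀, by omega, by omega, le_refl 1, le_refl 1, ?_⟩
    have hm : 0 < k + 2 := by omega
    refine ⟨fun (u : Fin (k+2) → Fin n) (i : Fin (k+2)) => (Sum.inl (u i, i) : Q'),
      ?_, ?_⟩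
    · intro u u' h
      funext i
      have := congrFun h i
      simp only [Sum.inl.injEq, Prod.mk.injEq] at this
      exact congrArg Prod.fst this
    · intro c
      set d : ℤ → Fin n := unpack A.ne (k + 2) c with hd
      have hpd : pack (k + 2) d = c := SetCA.pack_unpack A.ne hm c
      set e : ℤ → Q' := fun x => Sum.inl (d x, ((x : ℤ) : Fin (k + 2))) with he
      have hpe : pack (k + 2) e =
          fun z (i : Fin (k+2)) => (Sum.inl (c z i, i) : Q') := by
        funext z i
        simp only [pack, he]
        rw [SetCA.int_cast_block k z i]
        have : d (((k:ℕ)+2 : ℕ) * z + (i:ℤ)) = c z i := congrFun (congrFun hpd z) i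
        rw [this]
      have hue : unpack B.ne (k + 2) (fun z => (fun (i : Fin (k+2)) =>
          (Sum.inl (c z i, i) : Q'))) = e := by
        rw [← hpe]
        exact SetCA.unpack_pack B.ne hm e
      have hBG : B.G e = fun x => Sum.inl ((A.G d) x, ((x + z₀ : ℤ) : Fin (k + 2))) := by
        funext x
        show SetCA.f n k δ (fun j : Fin k => e (x - ((k - 1) / 2 : ℕ) + j)) = _
        set r : ℤ := (((k - 1) / 2 : ℕ) : ℤ) with hr
        have hnb : (fun j : Fin k => e (x - r + j)) = fun j : Fin k =>
            (Sum.inl (d (x - r + j), ((x - r : ℤ) : Fin (k+2)) + ((j : ℕ) : Fin (k + 2)))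
              : Q') := by
          funext j
          simp only [he]
          congr 1
          rw [Int.cast_add, Int.cast_natCast]
        have hrange : Set.range (fun j : Fin k => e (x - r + j)) =
            legalSet n k ((x - r : ℤ) : Fin (k+2)) (fun j : Fin k => d (x - r + j)) := by
          rw [hnb]; rfl
        rw [SetCA.f_legal n k hk δ _ _ _ hrange]
        congr 1
        apply Prod.ext
        · rfl
        · show ((x - r : ℤ) : Fin (k+2)) + ((k / 2 : ℕ) : Fin (k + 2)) =
            ((x + z₀ : ℤ) : Fin (k+2))
          rw [show (x + z₀ : ℤ) = (x - r) + ((k / 2 : ℕ) : ℤ) by rw [hz₀, hr]; ring,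
            Int.cast_add, Int.cast_natCast]
      show (fun z => (fun (i : Fin (k+2)) =>
          (Sum.inl ((rescale A (k+2) 1 z₀).G c z i, i) : Q'))) = _
      show _ = pack (k+2) (shiftG z₀ ((B.G)^[1] (unpack B.ne (k+2)
          (fun z (i : Fin (k+2)) => (Sum.inl (c z i, i) : Q')))))
      rw [Function.iterate_one, hue, hBG]
      funext z i
      show (Sum.inl ((pack (k+2) (shiftG z₀ ((A.G)^[1] d))) z i, i) : Q') =
        (Sum.inl ((A.G d) (((k+2 : ℕ) : ℤ) * z + (i:ℤ) - z₀),
          ((((k+2 : ℕ) : ℤ) * z + (i:ℤ) - z₀ + z₀ : ℤ) : Fin (k+2))) : Q')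
      rw [Function.iterate_one]
      congr 1
      apply Prod.ext
      · rfl
      · show (i : Fin (k+2)) = ((((k+2 : ℕ) : ℤ) * z + (i:ℤ) - z₀ + z₀ : ℤ) : Fin (k+2))
        rw [show (((k+2 : ℕ) : ℤ) * z + (i:ℤ) - z₀ + z₀ : ℤ) =
          ((k+2 : ℕ) : ℤ) * z + (i:ℤ) by ring]
        rw [SetCA.int_cast_block k z i]
end
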